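/- The map ψ̄ : 𝒜 → 𝒜' sending the class of (c_1, c_2, ..., c_n) to the class of (c_1+2, 1, c_2+2, 1, ..., c_n+2, 1) is a well-defined bijection from the set of quiddity cycles onto the set 𝒜' of quiddity cycles of even length whose entries equal to 1 make up exactly half of all entries. -/

import Mathlib

/-- One generating move of the dihedral action on finite sequences:
cyclic rotation by one, or reversal. -/
def dihStep (c d : List ℕ) : Prop := d = c.rotate 1 ∨ d = c.reverse

/-- The equivalence relation on finite sequences generated by cyclic
rotations and reversal (the dihedral group action). -/
def DihEquiv : List ℕ → List ℕ → Prop := Relation.EqvGen dihStep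

/-- The lists that are representatives of quiddity cycles: the smallest
dihedrally closed collection containing `(0,0)` and closed under the rule
`(c₁,…,cₙ) ↦ (c₁+1, 1, c₂+1, c₃, …, cₙ)`. -/
inductive IsQuiddity : List ℕ → Prop
  | base : IsQuiddity [0, 0]
  | dih {c d : List ℕ} : IsQuiddity c → dihStep c d → IsQuiddity d
  | grow {a b : ℕ} {t : List ℕ} : IsQuiddity (a :: b :: t) →
      IsQuiddity ((a + 1) :: 1 :: (b + 1) :: t)

/-- The (class of the) cycle `c` contains the finite sequence `d`:
some representative of `c` has `d` as a block of consecutive entries. -/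
def CycContains (c d : List ℕ) : Prop := ∃ c', DihEquiv c c' ∧ d <:+: c'

/-- The setoid given by the dihedral group action on finite sequences. -/
def dihSetoid : Setoid (List ℕ) := Relation.EqvGen.setoid dihStep

/-- Classes of finite sequences modulo the dihedral action. -/
abbrev Cyc : Type := Quotient dihSetoid

/-- The class of a finite sequence modulo the dihedral action. -/
def cyc (c : List ℕ) : Cyc := Quotient.mk dihSetoid c

/-- The set `𝒜` of quiddity cycles, as classes. -/
def QuiddityCyc : Set Cyc := {x | ∃ c, IsQuiddity c ∧ x = cyc c}

/-- The set `𝒜'` of quiddity cycles of even length whose entries equal to `1`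
make up exactly half of all entries. -/
def QuiddityCyc' : Set Cyc :=
  {x | ∃ c, IsQuiddity c ∧ Even c.length ∧ c.count 1 = c.length / 2 ∧ x = cyc c}

/-- The map `ψ` on finite sequences: `(c₁,…,cₘ) ↦ (c₁+2, 1, c₂+2, 1, …, cₘ+2, 1)`. -/
def psiL (c : List ℕ) : List ℕ := (c.map fun a => [a + 2, 1]).flatten

/-!
`psiL` commutes with rotations, and with reversal up to a rotation, so it descends to classes; it
is injective on classes because deleting the entries `1` and subtracting `2` undoes it on the
nose. Growing `ψ(c)` twice around its first `1` gives `ψ` of the grown cycle, so `ψ` maps quiddity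
cycles to quiddity cycles.

The converse rests on the fact that *every* entry `1` of a quiddity cycle can be removed, not only
the one inserted last. This goes by induction on the derivation: a `1` other than the newly
inserted one already lies in the smaller cycle (possibly sharing a neighbour with the new one), so
it can be removed there first and the growth step redone afterwards. Removing the ones of `ψ(f)`
one after the other gives back `f`. Finally, in a quiddity cycle of length at least `4` two ones
are never adjacent, as removing one of them would leave an entry `0`; hence if exactly half of the
entries are `1`, the ones alternate with entries `≥ 2` and the cycle is a rotation of some `ψ(f)`.
-/

theorem List.IsRotated.exists_append {α : Type*} {l l' : List α} (h : l ~r l') :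
    ∃ p q, l = p ++ q ∧ l' = q ++ p := by
  obtain ⟨n, hn, rfl⟩ := List.isRotated_iff_mod.1 h
  exact ⟨l.take n, l.drop n, (List.take_append_drop n l).symm, List.rotate_eq_drop_append_take hn⟩

theorem List.IsRotated.flatMap {α β : Type*} {l l' : List α} (h : l ~r l') (f : α → List β) :
    l.flatMap f ~r l'.flatMap f := by
  obtain ⟨p, q, rfl, rfl⟩ := h.exists_append
  simpa only [List.flatMap_append] using List.isRotated_append

theorem List.isRotated_of_append_singleton_eq_cons {α : Type*} {a : α} {l l' : List α}
    (h : l ++ [a] = a :: l') : l ~r l' := by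
  rcases l with _ | ⟨b, l⟩
  · simp_all
  · simp only [List.cons_append, List.cons.injEq] at h
    obtain ⟨rfl, rfl⟩ := h
    exact List.IsRotated.cons_append_singleton

/-- The relative positions of two windows `(_, 1, _)` of one cycle. -/
theorem window_cases {x y a b : ℕ} {s t p q : List ℕ} (hx : x ≠ 0) (hy : y ≠ 0)
    (hG : p ++ q = (x + 1) :: 1 :: (y + 1) :: s) (hL : q ++ p = (a + 1) :: 1 :: (b + 1) :: t) :
    (a = x ∧ b = y ∧ t = s) ∨ (a = y ∧ b = x ∧ s = [1] ∧ t = [1]) ∨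
    (∃ r, a = y ∧ s = 1 :: (b + 1) :: r ∧ t = r ++ [x + 1, 1]) ∨
    (∃ r, b = x ∧ s = r ++ [a + 1, 1] ∧ t = 1 :: (y + 1) :: r) ∨
    (∃ r r', s = r ++ (a + 1) :: 1 :: (b + 1) :: r' ∧ t = r' ++ (x + 1) :: 1 :: (y + 1) :: r) := by
  rcases q with _ | ⟨g, _ | ⟨h, q⟩⟩
  · simp_all
  · rcases p with _ | ⟨w, p⟩ <;> simp_all
  rcases p with _ | ⟨w, _ | ⟨v, _ | ⟨z, p⟩⟩⟩
  · simp_all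
  · simp_all
  all_goals
    simp only [List.cons_append, List.nil_append, List.cons.injEq] at hG hL
    obtain ⟨rfl, rfl, hG⟩ := hG
    obtain ⟨rfl, rfl, hL⟩ := hL
  · obtain ⟨hay, rfl⟩ := hG
    rcases q with _ | ⟨z₂, q⟩ <;> simp only [List.cons_append, List.nil_append,
      List.cons.injEq] at hL
    · obtain ⟨hb, rfl⟩ := hL
      exact Or.inr <| Or.inl ⟨by omega, by omega, rfl, rfl⟩
    · obtain ⟨rfl, rfl⟩ := hL
      exact Or.inr <| Or.inr <| Or.inl ⟨q, by omega, rfl, rfl⟩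
  · obtain ⟨rfl, rfl⟩ := hG
    rcases q with _ | ⟨z₂, q⟩ <;> simp only [List.cons_append, List.nil_append,
      List.cons.injEq] at hL
    · obtain ⟨hb, rfl⟩ := hL
      exact Or.inr <| Or.inr <| Or.inr <| Or.inl ⟨p, by omega, rfl, rfl⟩
    · obtain ⟨rfl, rfl⟩ := hL
      exact Or.inr <| Or.inr <| Or.inr <| Or.inr ⟨p, q, rfl, rfl⟩

@[simp] theorem psiL_nil : psiL [] = [] := rfl

@[simp] theorem psiL_cons (a : ℕ) (c : List ℕ) : psiL (a :: c) = (a + 2) :: 1 :: psiL c := rfl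

@[simp] theorem psiL_append (c d : List ℕ) : psiL (c ++ d) = psiL c ++ psiL d := by
  simp [psiL]

@[simp] theorem length_psiL (c : List ℕ) : (psiL c).length = 2 * c.length := by
  induction c with
  | nil => rfl
  | cons a c ih => simp only [psiL_cons, List.length_cons, ih]; ring

@[simp] theorem count_one_psiL (c : List ℕ) : (psiL c).count 1 = c.length := by
  induction c with
  | nil => rfl
  | cons a c ih => simp [ih]

theorem psiL_isRotated {c d : List ℕ} (h : c ~r d) : psiL c ~r psiL d := by
  simpa only [psiL, List.flatMap_def] using h.flatMap _

theorem reverse_psiL_isRotated (c : List ℕ) : (psiL c).reverse ~r psiL c.reverse := by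
  refine List.isRotated_of_append_singleton_eq_cons (a := 1) ?_
  induction c with
  | nil => rfl
  | cons a c ih => simp [ih]

def psiLInv (l : List ℕ) : List ℕ := l.flatMap fun a => if a = 1 then [] else [a - 2]

@[simp] theorem psiLInv_psiL (c : List ℕ) : psiLInv (psiL c) = c := by
  induction c with
  | nil => rfl
  | cons a c ih => simpa [psiLInv] using ih

theorem psiLInv_reverse (l : List ℕ) : psiLInv l.reverse = (psiLInv l).reverse := by
  rw [psiLInv, List.flatMap_reverse]
  congr 2
  funext a
  by_cases h : a = 1 <;> simp [h]

namespace DihEquiv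

variable {c d : List ℕ}

theorem of_isRotated (h : c ~r d) : DihEquiv c d := by
  obtain ⟨n, rfl⟩ := h
  induction n with
  | zero => rw [List.rotate_zero]; exact Relation.EqvGen.refl _
  | succ n ih =>
    rw [← List.rotate_rotate]
    exact ih.trans _ _ _ (Relation.EqvGen.rel _ _ (Or.inl rfl))

theorem self_reverse (c : List ℕ) : DihEquiv c c.reverse :=
  Relation.EqvGen.rel _ _ (Or.inr rfl)

theorem map {F : List ℕ → List ℕ} (hF : ∀ c d, dihStep c d → DihEquiv (F c) (F d))
    (h : DihEquiv c d) : DihEquiv (F c) (F d) := by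
  induction h with
  | rel c d h => exact hF c d h
  | refl c => exact Relation.EqvGen.refl _
  | symm _ _ _ ih => exact Relation.EqvGen.symm _ _ ih
  | trans _ _ _ _ _ ih₁ ih₂ => exact ih₁.trans _ _ _ ih₂

theorem psiL (h : DihEquiv c d) : DihEquiv (_root_.psiL c) (_root_.psiL d) := by
  refine h.map fun c d hstep => ?_
  rcases hstep with rfl | rfl
  · exact of_isRotated (psiL_isRotated (List.IsRotated.forall c 1).symm)
  · exact (self_reverse _).trans _ _ _ (of_isRotated (reverse_psiL_isRotated c))

theorem of_psiL (h : DihEquiv (_root_.psiL c) (_root_.psiL d)) : DihEquiv c d := by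
  simpa using h.map (F := psiLInv) fun c d hstep => by
    rcases hstep with rfl | rfl
    · refine of_isRotated ?_
      simpa only [psiLInv, List.flatMap_def] using ((List.IsRotated.forall c 1).symm.flatMap _)
    · rw [psiLInv_reverse]
      exact self_reverse _

end DihEquiv

def psiBar : Cyc → Cyc := Quotient.map psiL fun _ _ => DihEquiv.psiL

theorem head?_ne_one_of_not_infix_one_one {z : ℕ} {r : List ℕ} (h : ¬[1, 1] <:+: z :: 1 :: r) :
    r.head? ≠ some 1 := by
  rcases r with _ | ⟨v, r⟩
  · simp
  · rintro ⟨⟩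
    exact h ⟨[z], r, rfl⟩

theorem two_mul_count_one_le :
    ∀ {c : List ℕ}, ¬[1, 1] <:+: c → c.head? ≠ some 1 → 2 * c.count 1 ≤ c.length
  | [], _, _ => by simp
  | [z], _, hz => by simp_all
  | z :: w :: r, h11, hz => by
    have hz1 : z ≠ 1 := by simpa using hz
    by_cases hw : w = 1
    · subst hw
      have := two_mul_count_one_le (fun h => h11 (List.infix_cons (List.infix_cons h)))
        (head?_ne_one_of_not_infix_one_one h11)
      simp only [List.count_cons_of_ne hz1, List.count_cons_self, List.length_cons]
      omega
    · have := two_mul_count_one_le (fun h => h11 (List.infix_cons h)) (by simpa using hw)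
      simp only [List.count_cons_of_ne hz1, List.count_cons_of_ne hw, List.length_cons] at this ⊢
      omega

theorem exists_eq_psiL_of_two_mul_count_one :
    ∀ {c : List ℕ}, ¬[1, 1] <:+: c → c.head? ≠ some 1 → 0 ∉ c → 2 * c.count 1 = c.length →
      ∃ f, c = psiL f
  | [], _, _, _, _ => ⟨[], rfl⟩
  | [z], _, _, _, hc => by simp at hc
  | z :: w :: r, h11, hz, h0, hc => by
    have hz1 : z ≠ 1 := by simpa using hz
    have hz0 : z ≠ 0 := fun h => h0 (h ▸ List.mem_cons_self)
    by_cases hw : w = 1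
    · subst hw
      obtain ⟨f, rfl⟩ := exists_eq_psiL_of_two_mul_count_one
        (fun h => h11 (List.infix_cons (List.infix_cons h)))
        (head?_ne_one_of_not_infix_one_one h11)
        (fun h => h0 (List.mem_cons_of_mem _ (List.mem_cons_of_mem _ h)))
        (by
          simp only [List.count_cons_of_ne hz1, List.count_cons_self, List.length_cons] at hc
          omega)
      exact ⟨(z - 2) :: f, by rw [psiL_cons, Nat.sub_add_cancel (by omega : 2 ≤ z)]⟩
    · have := two_mul_count_one_le (fun h => h11 (List.infix_cons h)) (by simpa using hw)
      simp only [List.count_cons_of_ne hz1, List.count_cons_of_ne hw, List.length_cons] at this hc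
      omega

namespace IsQuiddity

variable {l l' u v t c : List ℕ} {a b : ℕ}

theorem rotate (h : IsQuiddity l) (n : ℕ) : IsQuiddity (l.rotate n) := by
  induction n with
  | zero => simpa using h
  | succ n ih => simpa [List.rotate_rotate] using ih.dih (Or.inl rfl)

theorem of_isRotated (h : IsQuiddity l) (hr : l ~r l') : IsQuiddity l' := by
  obtain ⟨n, rfl⟩ := hr
  exact h.rotate n

theorem reverse (h : IsQuiddity l) : IsQuiddity l.reverse :=
  h.dih (Or.inr rfl)

theorem append_comm (h : IsQuiddity (u ++ v)) : IsQuiddity (v ++ u) :=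
  h.of_isRotated List.isRotated_append

theorem grow_append (h : IsQuiddity (u ++ a :: b :: v)) :
    IsQuiddity (u ++ (a + 1) :: 1 :: (b + 1) :: v) := by
  have := (h.append_comm.grow (a := a) (b := b) (t := v ++ u))
  simpa using this.append_comm (u := (a + 1) :: 1 :: (b + 1) :: v) (v := u)

theorem sum_add_six (h : IsQuiddity l) : l.sum + 6 = 3 * l.length := by
  induction h with
  | base => rfl
  | dih _ hstep ih =>
    rcases hstep with rfl | rfl
    · rwa [(List.rotate_perm _ _).sum_eq, List.length_rotate]
    · rwa [List.sum_reverse, List.length_reverse]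
  | grow _ ih =>
    simp only [List.sum_cons, List.length_cons] at ih ⊢
    omega

theorem pos_of_mem (h : IsQuiddity l) (hl : 3 ≤ l.length) {v : ℕ} (hv : v ∈ l) : 0 < v := by
  induction h with
  | base => simp at hl
  | dih _ hstep ih =>
    rcases hstep with rfl | rfl
    · exact ih (by simpa using hl) ((List.rotate_perm _ _).mem_iff.1 hv)
    · exact ih (by simpa using hl) (List.mem_reverse.1 hv)
  | @grow a b t _ ih =>
    rcases List.mem_cons.1 hv with rfl | hv
    · omega
    rcases List.mem_cons.1 hv with rfl | hv
    · omega
    rcases List.mem_cons.1 hv with rfl | hv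
    · omega
    have : 0 < t.length := List.length_pos_of_mem hv
    exact ih (by simp only [List.length_cons]; omega) (by simp [hv])

theorem shrink_grow_of_isRotated {x y : ℕ} {s : List ℕ} (hg : IsQuiddity (x :: y :: s))
    (ih : ∀ {a b t}, x :: y :: s ~r (a + 1) :: 1 :: (b + 1) :: t → IsQuiddity (a :: b :: t))
    (hrot : (x + 1) :: 1 :: (y + 1) :: s ~r (a + 1) :: 1 :: (b + 1) :: t) :
    IsQuiddity (a :: b :: t) := by
  rcases eq_or_ne s [] with rfl | hs
  · have hlen := hrot.perm.length_eq
    have hsum := (hg.grow.of_isRotated hrot).sum_add_six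
    rcases t with _ | ⟨_, _⟩
    · obtain ⟨rfl, rfl⟩ : a = 0 ∧ b = 0 := by
        simp only [List.sum_cons, List.sum_nil, List.length_cons, List.length_nil] at hsum
        omega
      exact base
    · simp at hlen
  have hpos : ∀ v ∈ x :: y :: s, v ≠ 0 := fun v hv =>
    (hg.pos_of_mem (by simp [Nat.succ_le_iff, List.length_pos_iff, hs]) hv).ne'
  obtain ⟨p, q, hG, hL⟩ := hrot.exists_append
  rcases window_cases (hpos x (by simp)) (hpos y (by simp)) hG.symm hL.symm with
    ⟨rfl, rfl, rfl⟩ | ⟨rfl, rfl, rfl, rfl⟩ | ⟨r, rfl, rfl, rfl⟩ | ⟨r, rfl, rfl, rfl⟩ |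
    ⟨r, r', rfl, rfl⟩
  · exact hg
  · simpa using hg.reverse.of_isRotated (List.IsRotated.cons_append_singleton (a := 1))
  · obtain ⟨a, rfl⟩ := Nat.exists_eq_add_one_of_ne_zero (hpos a (by simp))
    have h₁ := ih (a := a) (b := b) (t := r ++ [x])
      (by simpa using List.isRotated_append (l := [x]) (l' := (a + 1) :: 1 :: (b + 1) :: r))
    have h₂ : IsQuiddity (x :: a :: b :: r) :=
      h₁.of_isRotated (by simpa using List.isRotated_append (l := a :: b :: r) (l' := [x]))
    simpa using h₂.grow.append_comm (u := [x + 1, 1]) (v := (a + 1) :: b :: r)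
  · obtain ⟨b, rfl⟩ := Nat.exists_eq_add_one_of_ne_zero (hpos b (by simp))
    have := ih (a := a) (b := b) (t := y :: r)
      (by simpa using List.isRotated_append (l := (b + 1) :: y :: r) (l' := [a + 1, 1]))
    simpa using this.grow_append (u := [a])
  · have := ih (a := a) (b := b) (t := r' ++ x :: y :: r)
      (by simpa using
        List.isRotated_append (l := x :: y :: r) (l' := (a + 1) :: 1 :: (b + 1) :: r'))
    simpa using this.grow_append (u := a :: b :: r')

theorem shrink_of_isRotated (h : IsQuiddity l) :
    ∀ {a b t}, l ~r (a + 1) :: 1 :: (b + 1) :: t → IsQuiddity (a :: b :: t) := by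
  induction h with
  | base =>
    intro a b t hrot
    simpa using hrot.perm.length_eq
  | @dih c _ _ hstep ih =>
    intro a b t hrot
    rcases hstep with rfl | rfl
    · exact ih ((List.IsRotated.forall _ 1).symm.trans hrot)
    · have hrev : c ~r (b + 1) :: 1 :: (a + 1) :: t.reverse := by
        have := List.isRotated_reverse_comm_iff.1 hrot
        rw [show ((a + 1) :: 1 :: (b + 1) :: t).reverse = t.reverse ++ [b + 1, 1, a + 1] by simp]
          at this
        exact this.trans List.isRotated_append
      have : IsQuiddity (t ++ [a, b]) := by simpa using (ih hrev).reverse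
      simpa using this.append_comm
  | grow hg ih => exact shrink_grow_of_isRotated hg ih

theorem shrink (h : IsQuiddity ((a + 1) :: 1 :: (b + 1) :: t)) : IsQuiddity (a :: b :: t) :=
  h.shrink_of_isRotated (List.IsRotated.refl _)

theorem shrink_append (h : IsQuiddity (u ++ (a + 1) :: 1 :: (b + 1) :: v)) :
    IsQuiddity (u ++ a :: b :: v) := by
  have := (h.append_comm (u := u)).shrink (a := a) (b := b) (t := v ++ u)
  simpa using this.append_comm (u := a :: b :: v) (v := u)

theorem eq_zero_zero_of_length_eq_two (h : IsQuiddity l) (hl : l.length = 2) : l = [0, 0] := by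
  obtain ⟨p, q, rfl⟩ := List.length_eq_two.1 hl
  have hsum := h.sum_add_six
  simp only [List.sum_cons, List.sum_nil, List.length_cons, List.length_nil] at hsum
  obtain ⟨rfl, rfl⟩ : p = 0 ∧ q = 0 := by omega
  rfl

protected theorem psiL (h : IsQuiddity c) : IsQuiddity (psiL c) := by
  induction h with
  | base => simpa using base.grow.grow (t := [1])
  | @dih c _ _ hstep ih =>
    rcases hstep with rfl | rfl
    · exact ih.of_isRotated (psiL_isRotated (List.IsRotated.forall c 1).symm)
    · exact ih.reverse.of_isRotated (reverse_psiL_isRotated c)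
  | @grow a b t _ ih =>
    have := (show IsQuiddity ([a + 2] ++ 1 :: (b + 2) :: 1 :: psiL t) from ih).grow_append.grow
    simpa using this

theorem shrink_psiL_append {c d : ℕ} {t : List ℕ} :
    ∀ {u p : List ℕ}, IsQuiddity (u ++ (c + 1) :: 1 :: (psiL t ++ (d + 1) :: p)) →
      IsQuiddity (u ++ c :: (t ++ d :: p)) := by
  induction t generalizing c with
  | nil => exact fun h => h.shrink_append
  | cons x t ih =>
    intro u p h
    have := (show IsQuiddity (u ++ (c + 1) :: 1 :: (x + 1 + 1) :: 1 :: (psiL t ++ (d + 1) :: p))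
      from h).shrink_append
    simpa using ih (u := u ++ [c]) (by simpa using this)

theorem of_psiL (h : IsQuiddity (psiL c)) : IsQuiddity c := by
  have hsum := h.sum_add_six
  rcases c with _ | ⟨x, c⟩
  · simp at hsum
  rcases c.eq_nil_or_concat' with rfl | ⟨t, z, rfl⟩
  · simp at hsum
  have h₁ := shrink_psiL_append (u := []) (p := [1]) (c := x + 1) (d := z + 1) (t := t)
    (by simpa using h)
  have h₂ := (show IsQuiddity (((x + 1) :: t) ++ [z + 1, 1]) by simpa using h₁).append_comm.shrink
  simpa using h₂.append_comm (u := [z]) (v := x :: t)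

theorem not_infix_one_one (h : IsQuiddity l) (hl : 4 ≤ l.length) : ¬[1, 1] <:+: l := by
  rintro ⟨s, t, rfl⟩
  obtain ⟨z, r, hzr⟩ := List.exists_cons_of_ne_nil (l := t ++ s) (by
    rintro hts
    simp [List.append_eq_nil_iff.1 hts] at hl)
  have h₁ : IsQuiddity (1 :: 1 :: z :: r) := by
    simpa [hzr] using (show IsQuiddity (s ++ 1 :: 1 :: t) by simpa using h).append_comm
  obtain ⟨z, rfl⟩ :=
    Nat.exists_eq_add_one_of_ne_zero (h₁.pos_of_mem (v := z) (by simp) (by simp)).ne'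
  have hlen := congrArg List.length hzr
  simp only [List.length_append, List.length_cons, List.length_nil] at hl hlen
  exact (h₁.shrink.pos_of_mem (by simp only [List.length_cons]; omega) List.mem_cons_self).ne rfl

theorem exists_psiL_isRotated (h : IsQuiddity c) (hc : 4 ≤ c.length)
    (hcount : 2 * c.count 1 = c.length) : ∃ f, psiL f ~r c := by
  obtain ⟨u, v, rfl⟩ :=
    List.append_of_mem (a := 1) (List.count_pos_iff.1 (by omega : 0 < c.count 1))
  have hrot : v ++ u ++ [1] ~r u ++ 1 :: v := by
    have := List.isRotated_append (l := v) (l' := u ++ [1])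
    rwa [List.append_assoc, List.singleton_append, ← List.append_assoc] at this
  have hlen : (v ++ u ++ [1]).length = (u ++ 1 :: v).length := hrot.perm.length_eq
  have hhead : (v ++ u ++ [1]).head? ≠ some 1 := by
    obtain ⟨x, w, hxw⟩ := List.exists_cons_of_ne_nil (l := v ++ u) (by
      rintro hvu
      simp [List.append_eq_nil_iff.1 hvu] at hc)
    rintro hx
    obtain rfl : x = 1 := by simpa [hxw] using hx
    have hr : u ++ 1 :: v ~r 1 :: (v ++ u) := by
      simpa using List.isRotated_append (l := u) (l' := 1 :: v)
    exact (h.of_isRotated hr).not_infix_one_one (hr.perm.length_eq ▸ hc) ⟨[], w, by simp [hxw]⟩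
  have h' := h.of_isRotated hrot.symm
  obtain ⟨f, hf⟩ := exists_eq_psiL_of_two_mul_count_one (h'.not_infix_one_one (by omega)) hhead
    (fun h0 => (h'.pos_of_mem (by omega) h0).ne rfl)
    (by rwa [hrot.perm.count_eq, hlen])
  exact ⟨f, hf ▸ hrot⟩

end IsQuiddity

/-- The map `ψ̄` induced by `ψ` is a well-defined bijection from the set `𝒜` of
quiddity cycles onto `𝒜'`. -/
theorem psiBar_bijOn :
    ∃ ψbar : Cyc → Cyc,
      (∀ c : List ℕ, IsQuiddity c → ψbar (cyc c) = cyc (psiL c)) ∧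
      Set.BijOn ψbar QuiddityCyc QuiddityCyc' := by
  refine ⟨psiBar, fun _ _ => rfl, ?_, ?_, ?_⟩
  · rintro _ ⟨c, hc, rfl⟩
    exact ⟨psiL c, hc.psiL, by simp, by simp, rfl⟩
  · rintro _ ⟨c, -, rfl⟩ _ ⟨d, -, rfl⟩ hcd
    exact Quotient.sound (DihEquiv.of_psiL (Quotient.exact hcd))
  · rintro _ ⟨c, hc, ⟨m, hm⟩, hcount, rfl⟩
    have hc4 : 4 ≤ c.length := by
      have hsum := hc.sum_add_six
      by_contra hlt
      have hcz := hc.eq_zero_zero_of_length_eq_two (by omega)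
      simp [hcz] at hcount
    obtain ⟨f, hf⟩ := hc.exists_psiL_isRotated hc4 (by omega)
    exact ⟨cyc f, ⟨f, (hc.of_isRotated hf.symm).of_psiL, rfl⟩,
      Quotient.sound (DihEquiv.of_isRotated hf)⟩
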